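/- For s defined by s_0 = 1, s_{2n} = Σ_{i=0}^{n-1}(2i+1)s_{2i}s_{2(n-i-1)}, one has s_{2n} = Σ over noncrossing pairings π of [2n] of Π_{V∈π}(ip(V)+1), where ip(V) is the number of points of [2n] lying strictly between the two endpoints of the pair V. -/

import Mathlib

/-!
Let `a` be the least point of a finite linearly ordered set `S`. In a noncrossing pairing of `S`
the partner `j` of `a` splits the remaining pairs into a noncrossing pairing of the points strictly
between `a` and `j` and one of the points beyond `j`, and conversely any two such pairings glue
back. The pair `{a, j}` has weight one more than the size of the inner part, and the pairs of each
part have the same inner points in the part as in `S`. So the weighted count of noncrossing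
pairings of `S` satisfies the recursion defining `s`, and by strong induction it is `s #S` for
even `#S` (and `0` for odd `#S`, when there are no pairings at all).
-/

/-- `P` is a partition of `Fin n`. -/
def IsPartitionOf {n : ℕ} (P : Finset (Finset (Fin n))) : Prop :=
  (∀ B ∈ P, B.Nonempty) ∧ ∀ i : Fin n, ∃! B, B ∈ P ∧ i ∈ B

/-- `P` is a pairing of `Fin n`. -/
def IsPairingOf {n : ℕ} (P : Finset (Finset (Fin n))) : Prop :=
  IsPartitionOf P ∧ ∀ B ∈ P, B.card = 2

/-- A partition is noncrossing if no two distinct blocks cross. -/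
def IsNoncrossing {n : ℕ} (P : Finset (Finset (Fin n))) : Prop :=
  ∀ B ∈ P, ∀ C ∈ P, B ≠ C →
    ¬∃ a b c d : Fin n, a < b ∧ b < c ∧ c < d ∧ a ∈ B ∧ c ∈ B ∧ b ∈ C ∧ d ∈ C

/-- The number of inner points of a pair: points lying strictly between its two
endpoints. -/
noncomputable def innerPoints {n : ℕ} (B : Finset (Fin n)) : ℕ :=
  Set.ncard {c : Fin n | ∃ a ∈ B, ∃ b ∈ B, a < c ∧ c < b}

open Finset

theorem Finset.filter_union_eq_left {β : Type*} [DecidableEq β] {s t : Finset β} {p : β → Prop}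
    [DecidablePred p] (hs : ∀ x ∈ s, p x) (ht : ∀ x ∈ t, ¬p x) : {x ∈ s ∪ t | p x} = s := by
  rw [filter_union, filter_true_of_mem hs, filter_false_of_mem ht, union_empty]

theorem Finset.sum_eq_sum_sum_filter_of_existsUnique {ι κ M : Type*} [AddCommMonoid M]
    {s : Finset ι} {t : Finset κ} (r : ι → κ → Prop) [DecidableRel r]
    (h : ∀ i ∈ s, ∃! k, k ∈ t ∧ r i k) (f : ι → M) :
    ∑ i ∈ s, f i = ∑ k ∈ t, ∑ i ∈ s with r i k, f i := by
  rw [sum_comm' (t' := s) (s' := fun i => {k ∈ t | r i k})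
    fun k i => by simp only [mem_filter]; tauto]
  refine sum_congr rfl fun i hi => ?_
  obtain ⟨k, hk, huniq⟩ := h i hi
  have hfilter : {k ∈ t | r i k} = {k} :=
    eq_singleton_iff_unique_mem.mpr ⟨mem_filter.mpr hk, fun k' hk' => huniq k' (mem_filter.mp hk')⟩
  rw [hfilter, sum_singleton]

theorem Finset.sum_range_two_mul_add_one_of_odd {M : Type*} [AddCommMonoid M] (F : ℕ → M)
    (hF : ∀ i, Odd i → F i = 0) (m : ℕ) :
    ∑ i ∈ range (2 * m + 1), F i = ∑ i ∈ range (m + 1), F (2 * i) := by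
  induction m with
  | zero => simp
  | succ m ih =>
    rw [show 2 * (m + 1) + 1 = 2 * m + 1 + 1 + 1 by ring, sum_range_succ, sum_range_succ, ih,
      hF _ (odd_two_mul_add_one m), add_zero, sum_range_succ _ (m + 1)]
    rfl


def IsPairing {α : Type*} (S : Finset α) (P : Finset (Finset α)) : Prop :=
  (∀ B ∈ P, B ⊆ S ∧ #B = 2) ∧ ∀ x ∈ S, ∃! B, B ∈ P ∧ x ∈ B

namespace IsPairing

variable {α : Type*} {S T U : Finset α} {P Q R : Finset (Finset α)}

theorem eq_of_mem (h : IsPairing S P) {B C : Finset α} (hB : B ∈ P) (hC : C ∈ P) {x : α}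
    (hxB : x ∈ B) (hxC : x ∈ C) : B = C := by
  obtain ⟨D, -, hD⟩ := h.2 x ((h.1 B hB).1 hxB)
  exact (hD B ⟨hB, hxB⟩).trans (hD C ⟨hC, hxC⟩).symm

theorem nonempty (h : IsPairing S P) {B : Finset α} (hB : B ∈ P) : B.Nonempty :=
  card_pos.mp (by rw [(h.1 B hB).2]; norm_num)

theorem disjoint (hQ : IsPairing T Q) (hR : IsPairing U R) (hTU : Disjoint T U) : Disjoint Q R :=
  disjoint_left.mpr fun B hBQ hBR => by
    obtain ⟨x, hx⟩ := hQ.nonempty hBQ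
    exact disjoint_left.mp hTU ((hQ.1 B hBQ).1 hx) ((hR.1 B hBR).1 hx)

variable [DecidableEq α]

theorem filter_subset_of_forall (h : IsPairing S P) (hUS : U ⊆ S)
    (hU : ∀ B ∈ P, ∀ x ∈ B, x ∈ U → B ⊆ U) : IsPairing U {B ∈ P | B ⊆ U} := by
  refine ⟨fun B hB => ?_, fun x hx => ?_⟩
  · rw [mem_filter] at hB
    exact ⟨hB.2, (h.1 B hB.1).2⟩
  · obtain ⟨B, ⟨hB, hxB⟩, huniq⟩ := h.2 x (hUS hx)
    exact ⟨B, ⟨mem_filter.mpr ⟨hB, hU B hB x hxB hx⟩, hxB⟩,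
      fun C ⟨hC, hxC⟩ => huniq C ⟨(mem_filter.mp hC).1, hxC⟩⟩

theorem card_eq (h : IsPairing S P) : #S = 2 * #P := by
  have hS : S = P.biUnion id := by
    ext x
    simp only [mem_biUnion, id]
    refine ⟨fun hx => ?_, fun ⟨B, hB, hxB⟩ => (h.1 B hB).1 hxB⟩
    obtain ⟨B, ⟨hB, hxB⟩, -⟩ := h.2 x hx
    exact ⟨B, hB, hxB⟩
  have hdisj : (P : Set (Finset α)).PairwiseDisjoint id := fun B hB C hC hne =>
    disjoint_left.mpr fun x hxB hxC => hne (h.eq_of_mem hB hC hxB hxC)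
  rw [hS, card_biUnion hdisj]
  simp only [id]
  rw [sum_congr rfl fun B hB => (h.1 B hB).2, sum_const, smul_eq_mul, mul_comm]

theorem pair {a b : α} (hab : a ≠ b) : IsPairing {a, b} {{a, b}} := by
  refine ⟨fun B hB => ?_, fun x hx => ⟨{a, b}, ⟨mem_singleton_self _, hx⟩, ?_⟩⟩
  · rw [mem_singleton.mp hB]
    exact ⟨subset_refl _, card_pair hab⟩
  · exact fun B hB => mem_singleton.mp hB.1

theorem union (hTU : Disjoint T U) (hQ : IsPairing T Q) (hR : IsPairing U R) :
    IsPairing (T ∪ U) (Q ∪ R) := by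
  refine ⟨fun B hB => ?_, fun x hx => ?_⟩
  · rcases mem_union.mp hB with hB | hB
    · exact ⟨(hQ.1 B hB).1.trans subset_union_left, (hQ.1 B hB).2⟩
    · exact ⟨(hR.1 B hB).1.trans subset_union_right, (hR.1 B hB).2⟩
  · rcases mem_union.mp hx with hx | hx
    · obtain ⟨B, ⟨hB, hxB⟩, huniq⟩ := hQ.2 x hx
      refine ⟨B, ⟨mem_union_left _ hB, hxB⟩, fun C ⟨hC, hxC⟩ => ?_⟩
      rcases mem_union.mp hC with hC | hC
      · exact huniq C ⟨hC, hxC⟩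
      · exact absurd ((hR.1 C hC).1 hxC) (disjoint_left.mp hTU hx)
    · obtain ⟨B, ⟨hB, hxB⟩, huniq⟩ := hR.2 x hx
      refine ⟨B, ⟨mem_union_right _ hB, hxB⟩, fun C ⟨hC, hxC⟩ => ?_⟩
      rcases mem_union.mp hC with hC | hC
      · exact absurd ((hQ.1 C hC).1 hxC) (disjoint_right.mp hTU hx)
      · exact huniq C ⟨hC, hxC⟩

theorem existsUnique_partner (h : IsPairing S P) {a : α} (ha : a ∈ S) :
    ∃! j, j ∈ S.erase a ∧ {a, j} ∈ P := by
  obtain ⟨B, ⟨hB, haB⟩, -⟩ := h.2 a ha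
  obtain ⟨x, y, hxy, rfl⟩ := card_eq_two.mp (h.1 B hB).2
  obtain ⟨j, hja, hB'⟩ : ∃ j, j ≠ a ∧ {a, j} ∈ P := by
    rcases mem_insert.mp haB with rfl | hay
    · exact ⟨y, hxy.symm, hB⟩
    · obtain rfl := mem_singleton.mp hay
      rw [pair_comm] at hB
      exact ⟨x, hxy, hB⟩
  refine ⟨j, ⟨mem_erase.mpr ⟨hja, (h.1 _ hB').1 (by simp)⟩, hB'⟩, fun k ⟨hk, hkP⟩ => ?_⟩
  have hkj : k ∈ ({a, j} : Finset α) :=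
    h.eq_of_mem hkP hB' (mem_insert_self a _) (mem_insert_self a _) ▸ (by simp)
  simpa [(mem_erase.mp hk).1] using hkj

end IsPairing

section Noncrossing

variable {α : Type*} [LinearOrder α]

def Crosses (B C : Finset α) : Prop :=
  ∃ a b c d : α, a < b ∧ b < c ∧ c < d ∧ a ∈ B ∧ c ∈ B ∧ b ∈ C ∧ d ∈ C

def Noncrossing (P : Finset (Finset α)) : Prop :=
  ∀ B ∈ P, ∀ C ∈ P, B ≠ C → ¬Crosses B C

namespace Noncrossing

variable {P Q R : Finset (Finset α)}

theorem mono (h : Noncrossing P) (hQP : Q ⊆ P) : Noncrossing Q :=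
  fun B hB C hC => h B (hQP hB) C (hQP hC)

theorem singleton (D : Finset α) : Noncrossing {D} := fun _ hB _ hC hne =>
  absurd ((mem_singleton.mp hB).trans (mem_singleton.mp hC).symm) hne

theorem union (hQ : Noncrossing Q) (hR : Noncrossing R)
    (hQR : ∀ B ∈ Q, ∀ C ∈ R, ¬Crosses B C ∧ ¬Crosses C B) : Noncrossing (Q ∪ R) := by
  intro B hB C hC hne
  rcases mem_union.mp hB with hB | hB <;> rcases mem_union.mp hC with hC | hC
  · exact hQ B hB C hC hne
  · exact (hQR B hB C hC).1
  · exact (hQR C hC B hB).2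
  · exact hR B hB C hC hne

end Noncrossing

theorem not_crosses_of_forall_lt {B C : Finset α} (h : ∀ x ∈ B, ∀ y ∈ C, x < y) :
    ¬Crosses B C ∧ ¬Crosses C B := by
  constructor
  · rintro ⟨-, b, c, -, -, hbc, -, -, hc, hb, -⟩
    exact lt_asymm hbc (h c hc b hb)
  · rintro ⟨a, b, -, -, hab, -, -, ha, -, hb, -⟩
    exact lt_asymm hab (h b hb a ha)

theorem not_crosses_pair_of_forall_mem_Ioo {a b : α} {B : Finset α}
    (h : ∀ x ∈ B, a < x ∧ x < b) : ¬Crosses {a, b} B ∧ ¬Crosses B {a, b} := by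
  constructor
  · rintro ⟨p, q, r, t, hpq, hqr, hrt, hp, hr, hq, ht⟩
    have := h q hq
    have := h t ht
    simp only [mem_insert, mem_singleton] at hp hr
    rcases hr with rfl | rfl <;> order
  · rintro ⟨p, q, r, t, hpq, hqr, hrt, hp, hr, hq, ht⟩
    have := h p hp
    have := h r hr
    simp only [mem_insert, mem_singleton] at hq ht
    rcases hq with rfl | rfl <;> order

end Noncrossing

section Weights

variable {α : Type*} [LinearOrder α]

def innerPointsIn (S B : Finset α) : Finset α :=
  {c ∈ S | ∃ x ∈ B, ∃ y ∈ B, x < c ∧ c < y}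

open Classical in
noncomputable def ncPairings (S : Finset α) : Finset (Finset (Finset α)) :=
  {P ∈ S.powerset.powerset | IsPairing S P ∧ Noncrossing P}

def pairingWeight (S : Finset α) (P : Finset (Finset α)) : ℕ :=
  ∏ B ∈ P, (#(innerPointsIn S B) + 1)

noncomputable def weightSum (S : Finset α) : ℕ :=
  ∑ P ∈ ncPairings S, pairingWeight S P

open Classical in
theorem mem_ncPairings {S : Finset α} {P : Finset (Finset α)} :
    P ∈ ncPairings S ↔ IsPairing S P ∧ Noncrossing P := by
  rw [ncPairings, mem_filter, and_iff_right_iff_imp]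
  exact fun h => mem_powerset.mpr fun B hB => mem_powerset.mpr (h.1.1 B hB).1

theorem innerPointsIn_pair (S : Finset α) {x y : α} (hxy : x < y) :
    innerPointsIn S {x, y} = {c ∈ S | x < c ∧ c < y} := by
  ext c
  simp only [innerPointsIn, mem_filter, mem_insert, mem_singleton]
  constructor
  · rintro ⟨hc, p, hp, q, hq, hpc, hcq⟩
    refine ⟨hc, ?_, ?_⟩ <;> rcases hp with rfl | rfl <;> rcases hq with rfl | rfl <;> order
  · rintro ⟨hc, hxc, hcy⟩
    exact ⟨hc, x, Or.inl rfl, y, Or.inr rfl, hxc, hcy⟩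

theorem innerPointsIn_eq_of_subset {S U B : Finset α} (hUS : U ⊆ S) (hBU : B ⊆ U)
    (hU : ∀ x ∈ U, ∀ y ∈ U, ∀ c ∈ S, x < c → c < y → c ∈ U) :
    innerPointsIn S B = innerPointsIn U B := by
  ext c
  simp only [innerPointsIn, mem_filter]
  constructor
  · rintro ⟨hc, x, hx, y, hy, hxc, hcy⟩
    exact ⟨hU x (hBU hx) y (hBU hy) c hc hxc hcy, x, hx, y, hy, hxc, hcy⟩
  · rintro ⟨hc, hB⟩
    exact ⟨hUS hc, hB⟩

end Weights

section Counting

variable {α : Type*} [LinearOrder α]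

theorem sum_card_filter_lt {M : Type*} [AddCommMonoid M] (T : Finset α) (F : ℕ → M) :
    ∑ j ∈ T, F #{x ∈ T | x < j} = ∑ i ∈ range #T, F i := by
  have hmono : StrictMonoOn (fun j => #{x ∈ T | x < j}) T := fun j hj k _ hjk =>
    card_lt_card ⟨monotone_filter_right _ fun _ _ hx => hx.trans hjk,
      fun h => lt_irrefl j (mem_filter.mp (h (mem_filter.mpr ⟨hj, hjk⟩))).2⟩
  have himage : T.image (fun j => #{x ∈ T | x < j}) = range #T := by
    refine eq_of_subset_of_card_le (fun i hi => ?_) ?_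
    · obtain ⟨j, hj, rfl⟩ := mem_image.mp hi
      exact mem_range.mpr (card_lt_card (filter_ssubset.mpr ⟨j, hj, lt_irrefl j⟩))
    · rw [card_range, card_image_of_injOn hmono.injOn]
  rw [← himage, sum_image hmono.injOn]

theorem card_filter_lt_add_card_filter_gt {T : Finset α} {j : α} (hj : j ∈ T) :
    #{x ∈ T | x < j} + #{x ∈ T | j < x} + 1 = #T := by
  have hnot : {x ∈ T | ¬x < j} = insert j {x ∈ T | j < x} := by
    ext x
    simp only [mem_filter, mem_insert, not_lt]
    constructor
    · rintro ⟨hx, hjx⟩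
      exact (eq_or_lt_of_le hjx).imp Eq.symm fun h => ⟨hx, h⟩
    · rintro (rfl | ⟨hx, hjx⟩)
      exacts [⟨hj, le_rfl⟩, ⟨hx, hjx.le⟩]
  rw [add_assoc, ← card_insert_of_notMem fun h => lt_irrefl j (mem_filter.mp h).2, ← hnot,
    card_filter_add_card_filter_not]

end Counting

section Decomposition

variable {α : Type*} [LinearOrder α] {a j : α} {T : Finset α}

theorem insert_eq_pair_union (ha : ∀ x ∈ T, a < x) (hj : j ∈ T) :
    insert a T = {a, j} ∪ ({x ∈ T | x < j} ∪ {x ∈ T | j < x}) := by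
  ext x
  simp only [mem_insert, mem_union, mem_filter, mem_singleton]
  rcases lt_trichotomy x j with h | rfl | h <;> grind

theorem disjoint_pair_union (ha : ∀ x ∈ T, a < x) :
    Disjoint {a, j} ({x ∈ T | x < j} ∪ {x ∈ T | j < x}) := by
  simp only [disjoint_insert_left, disjoint_singleton_left, mem_union, mem_filter]
  exact ⟨fun h => by rcases h with ⟨h, -⟩ | ⟨h, -⟩ <;> exact lt_irrefl a (ha a h), by simp⟩

theorem disjoint_filter_lt_filter_gt : Disjoint {x ∈ T | x < j} {x ∈ T | j < x} :=
  disjoint_filter.mpr fun _ _ h₁ h₂ => lt_asymm h₁ h₂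

variable {P Q R : Finset (Finset α)}

theorem isPairing_insert_pair_union (ha : ∀ x ∈ T, a < x) (hj : j ∈ T)
    (hQ : IsPairing {x ∈ T | x < j} Q) (hR : IsPairing {x ∈ T | j < x} R) :
    IsPairing (insert a T) (insert {a, j} (Q ∪ R)) := by
  rw [insert_eq_pair_union ha hj, insert_eq]
  exact (IsPairing.pair (ha j hj).ne).union (disjoint_pair_union ha)
    (hQ.union disjoint_filter_lt_filter_gt hR)

theorem noncrossing_insert_pair_union (ha : ∀ x ∈ T, a < x) (hj : j ∈ T)
    (hQ : IsPairing {x ∈ T | x < j} Q) (hR : IsPairing {x ∈ T | j < x} R)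
    (hQnc : Noncrossing Q) (hRnc : Noncrossing R) :
    Noncrossing (insert {a, j} (Q ∪ R)) := by
  have hQsub : ∀ B ∈ Q, ∀ x ∈ B, x ∈ T ∧ x < j := fun B hB x hx =>
    mem_filter.mp ((hQ.1 B hB).1 hx)
  have hRsub : ∀ B ∈ R, ∀ x ∈ B, x ∈ T ∧ j < x := fun B hB x hx =>
    mem_filter.mp ((hR.1 B hB).1 hx)
  rw [insert_eq]
  refine (Noncrossing.singleton _).union (hQnc.union hRnc fun B hB C hC =>
    not_crosses_of_forall_lt fun x hx y hy => (hQsub B hB x hx).2.trans (hRsub C hC y hy).2) ?_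
  intro D hD B hB
  rw [mem_singleton.mp hD]
  rcases mem_union.mp hB with hB | hB
  · exact not_crosses_pair_of_forall_mem_Ioo fun x hx =>
      ⟨ha x (hQsub B hB x hx).1, (hQsub B hB x hx).2⟩
  · refine not_crosses_of_forall_lt fun x hx y hy => ?_
    have hxj : x ≤ j := by
      rcases mem_insert.mp hx with rfl | hx
      · exact (ha j hj).le
      · exact (mem_singleton.mp hx).le
    exact hxj.trans_lt (hRsub B hB y hy).2

theorem subset_or_subset_of_mem (ha : ∀ x ∈ T, a < x) (hP : IsPairing (insert a T) P)
    (hPnc : Noncrossing P) (hajP : {a, j} ∈ P) {B : Finset α} (hB : B ∈ P) (hne : B ≠ {a, j}) :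
    B ⊆ {x ∈ T | x < j} ∨ B ⊆ {x ∈ T | j < x} := by
  have hmem : ∀ z ∈ B, z ∈ T ∧ z ≠ j := by
    intro z hz
    have hzaj : z ∉ ({a, j} : Finset α) := fun h => hne (hP.eq_of_mem hB hajP hz h)
    simp only [mem_insert, mem_singleton, not_or] at hzaj
    exact ⟨(mem_insert.mp ((hP.1 B hB).1 hz)).resolve_left hzaj.1, hzaj.2⟩
  -- a block with a point on each side of `j` would cross `{a, j}`
  by_contra hcon
  simp only [not_or, not_subset, mem_filter, not_and, not_lt] at hcon
  obtain ⟨⟨y, hyB, hyj⟩, ⟨x, hxB, hxj⟩⟩ := hcon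
  have hxT := hmem x hxB
  have hyT := hmem y hyB
  exact hPnc _ hajP _ hB (Ne.symm hne) ⟨a, x, j, y, ha x hxT.1,
    lt_of_le_of_ne (hxj hxT.1) hxT.2, lt_of_le_of_ne (hyj hyT.1) hyT.2.symm,
    by simp, by simp, hxB, hyB⟩

theorem innerPointsIn_insert_filter (ha : ∀ x ∈ T, a < x) {p : α → Prop} [DecidablePred p]
    (hp : ∀ x y c, p x → p y → x < c → c < y → p c) {B : Finset α} (hB : B ⊆ {x ∈ T | p x}) :
    innerPointsIn (insert a T) B = innerPointsIn {x ∈ T | p x} B :=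
  innerPointsIn_eq_of_subset ((filter_subset _ _).trans (subset_insert _ _)) hB
    fun x hx y hy c hc hxc hcy => by
      rw [mem_filter] at hx hy ⊢
      rcases mem_insert.mp hc with rfl | hc
      · exact absurd ((ha x hx.1).trans hxc) (lt_irrefl c)
      · exact ⟨hc, hp x y c hx.2 hy.2 hxc hcy⟩

theorem pairingWeight_insert_pair_union (ha : ∀ x ∈ T, a < x) (hj : j ∈ T)
    (hQ : IsPairing {x ∈ T | x < j} Q) (hR : IsPairing {x ∈ T | j < x} R) :
    pairingWeight (insert a T) (insert {a, j} (Q ∪ R)) =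
      (#{x ∈ T | x < j} + 1) * pairingWeight {x ∈ T | x < j} Q *
        pairingWeight {x ∈ T | j < x} R := by
  have hQR := hQ.union disjoint_filter_lt_filter_gt hR
  have hnot : {a, j} ∉ Q ∪ R := fun h => disjoint_left.mp (disjoint_pair_union ha)
    (mem_insert_self a _) ((hQR.1 _ h).1 (mem_insert_self a _))
  have hpair : innerPointsIn (insert a T) {a, j} = {x ∈ T | x < j} := by
    rw [innerPointsIn_pair _ (ha j hj)]
    ext c
    simp only [mem_filter, mem_insert]
    constructor
    · rintro ⟨rfl | hc, hac, hcj⟩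
      exacts [absurd hac (lt_irrefl c), ⟨hc, hcj⟩]
    · rintro ⟨hc, hcj⟩
      exact ⟨Or.inr hc, ha c hc, hcj⟩
  have hleft : ∀ B ∈ Q, innerPointsIn (insert a T) B = innerPointsIn {x ∈ T | x < j} B :=
    fun B hB => innerPointsIn_insert_filter ha (fun _ _ _ _ hy _ hcy => hcy.trans hy) (hQ.1 B hB).1
  have hright : ∀ B ∈ R, innerPointsIn (insert a T) B = innerPointsIn {x ∈ T | j < x} B :=
    fun B hB => innerPointsIn_insert_filter ha (fun _ _ _ hx _ hxc _ => hx.trans hxc) (hR.1 B hB).1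
  rw [pairingWeight, prod_insert hnot, prod_union (hQ.disjoint hR disjoint_filter_lt_filter_gt),
    hpair, prod_congr rfl fun B hB => congrArg (#· + 1) (hleft B hB),
    prod_congr rfl fun B hB => congrArg (#· + 1) (hright B hB), ← mul_assoc]
  rfl

theorem filter_subset_mem_ncPairings (ha : ∀ x ∈ T, a < x) (hP : P ∈ ncPairings (insert a T))
    (hajP : {a, j} ∈ P) :
    {B ∈ P | B ⊆ {x ∈ T | x < j}} ∈ ncPairings {x ∈ T | x < j} ∧
      {B ∈ P | B ⊆ {x ∈ T | j < x}} ∈ ncPairings {x ∈ T | j < x} := by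
  obtain ⟨hP, hPnc⟩ := mem_ncPairings.mp hP
  have hside : ∀ B ∈ P, ∀ x ∈ B, x ∈ {x ∈ T | x < j} ∪ {x ∈ T | j < x} →
      B ⊆ {x ∈ T | x < j} ∨ B ⊆ {x ∈ T | j < x} := fun B hB x hxB hx =>
    subset_or_subset_of_mem ha hP hPnc hajP hB fun h =>
      disjoint_left.mp (disjoint_pair_union ha) (h ▸ hxB) hx
  constructor <;> refine mem_ncPairings.mpr ⟨hP.filter_subset_of_forall
    ((filter_subset _ _).trans (subset_insert _ _)) fun B hB x hxB hx => ?_,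
      hPnc.mono (filter_subset _ _)⟩
  · exact (hside B hB x hxB (mem_union_left _ hx)).resolve_right fun hBR =>
      disjoint_left.mp disjoint_filter_lt_filter_gt hx (hBR hxB)
  · exact (hside B hB x hxB (mem_union_right _ hx)).resolve_left fun hBL =>
      disjoint_left.mp disjoint_filter_lt_filter_gt (hBL hxB) hx

theorem insert_pair_union_filter_subset (ha : ∀ x ∈ T, a < x) (hP : P ∈ ncPairings (insert a T))
    (hajP : {a, j} ∈ P) :
    insert {a, j} ({B ∈ P | B ⊆ {x ∈ T | x < j}} ∪ {B ∈ P | B ⊆ {x ∈ T | j < x}}) = P := by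
  obtain ⟨hP, hPnc⟩ := mem_ncPairings.mp hP
  ext B
  simp only [mem_insert, mem_union, mem_filter]
  constructor
  · rintro (rfl | ⟨hB, -⟩ | ⟨hB, -⟩) <;> assumption
  · intro hB
    by_cases hBaj : B = {a, j}
    · exact Or.inl hBaj
    · rcases subset_or_subset_of_mem ha hP hPnc hajP hB hBaj with h | h
      exacts [Or.inr (Or.inl ⟨hB, h⟩), Or.inr (Or.inr ⟨hB, h⟩)]

theorem filter_subset_insert_pair_union (ha : ∀ x ∈ T, a < x)
    (hQ : IsPairing {x ∈ T | x < j} Q) (hR : IsPairing {x ∈ T | j < x} R) :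
    {B ∈ insert {a, j} (Q ∪ R) | B ⊆ {x ∈ T | x < j}} = Q ∧
      {B ∈ insert {a, j} (Q ∪ R) | B ⊆ {x ∈ T | j < x}} = R := by
  have hpair : ∀ U ⊆ {x ∈ T | x < j} ∪ {x ∈ T | j < x}, ¬{a, j} ⊆ U := fun U hU h =>
    disjoint_left.mp (disjoint_pair_union ha) (mem_insert_self a _) (hU (h (mem_insert_self a _)))
  constructor
  · rw [← union_insert]
    refine filter_union_eq_left (fun B hB => (hQ.1 B hB).1) fun B hB hBL => ?_
    rcases mem_insert.mp hB with rfl | hB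
    · exact hpair _ subset_union_left hBL
    · obtain ⟨z, hz⟩ := hR.nonempty hB
      exact disjoint_left.mp disjoint_filter_lt_filter_gt (hBL hz) ((hR.1 B hB).1 hz)
  · rw [union_comm, ← union_insert]
    refine filter_union_eq_left (fun B hB => (hR.1 B hB).1) fun B hB hBR => ?_
    rcases mem_insert.mp hB with rfl | hB
    · exact hpair _ subset_union_right hBR
    · obtain ⟨z, hz⟩ := hQ.nonempty hB
      exact disjoint_left.mp disjoint_filter_lt_filter_gt ((hQ.1 B hB).1 hz) (hBR hz)

theorem sum_filter_pair_mem_ncPairings (ha : ∀ x ∈ T, a < x) (hj : j ∈ T) :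
    ∑ P ∈ ncPairings (insert a T) with {a, j} ∈ P, pairingWeight (insert a T) P =
      (#{x ∈ T | x < j} + 1) * weightSum {x ∈ T | x < j} * weightSum {x ∈ T | j < x} := by
  simp_rw [weightSum, mul_assoc, sum_mul_sum, mul_sum, ← sum_product', ← mul_assoc]
  symm
  refine sum_nbij' (fun p => insert {a, j} (p.1 ∪ p.2))
    (fun P => ({B ∈ P | B ⊆ {x ∈ T | x < j}}, {B ∈ P | B ⊆ {x ∈ T | j < x}}))
    (fun p hp => ?_) (fun P hP => ?_) (fun p hp => ?_) (fun P hP => ?_) (fun p hp => ?_)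
  · rw [mem_product, mem_ncPairings, mem_ncPairings] at hp
    exact mem_filter.mpr ⟨mem_ncPairings.mpr ⟨isPairing_insert_pair_union ha hj hp.1.1 hp.2.1,
      noncrossing_insert_pair_union ha hj hp.1.1 hp.2.1 hp.1.2 hp.2.2⟩, mem_insert_self _ _⟩
  · rw [mem_filter] at hP
    exact mem_product.mpr (filter_subset_mem_ncPairings ha hP.1 hP.2)
  · rw [mem_product, mem_ncPairings, mem_ncPairings] at hp
    exact Prod.ext_iff.mpr (filter_subset_insert_pair_union ha hp.1.1 hp.2.1)
  · rw [mem_filter] at hP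
    exact insert_pair_union_filter_subset ha hP.1 hP.2
  · rw [mem_product, mem_ncPairings, mem_ncPairings] at hp
    exact (pairingWeight_insert_pair_union ha hj hp.1.1 hp.2.1).symm

end Decomposition

section WeightSum

variable {α : Type*} [LinearOrder α]

theorem weightSum_empty : weightSum (∅ : Finset α) = 1 := by
  have hempty : ncPairings (∅ : Finset α) = {∅} := by
    ext P
    rw [mem_ncPairings, mem_singleton]
    constructor
    · rintro ⟨hP, -⟩
      have := hP.card_eq
      rw [card_empty] at this
      exact card_eq_zero.mp (by omega)
    · rintro rfl
      exact ⟨⟨by simp, by simp⟩, by simp [Noncrossing]⟩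
  simp [weightSum, hempty, pairingWeight]

theorem weightSum_eq_zero_of_odd {S : Finset α} (h : Odd #S) : weightSum S = 0 :=
  sum_eq_zero fun _ hP => absurd h <|
    Nat.not_odd_iff_even.mpr ((mem_ncPairings.mp hP).1.card_eq ▸ even_two_mul _)

theorem weightSum_insert {a : α} {T : Finset α} (ha : ∀ x ∈ T, a < x) :
    weightSum (insert a T) = ∑ j ∈ T,
      (#{x ∈ T | x < j} + 1) * weightSum {x ∈ T | x < j} * weightSum {x ∈ T | j < x} := by
  have haT : a ∉ T := fun h => lt_irrefl a (ha a h)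
  rw [weightSum, sum_eq_sum_sum_filter_of_existsUnique (fun P j => {a, j} ∈ P) fun P hP => ?_]
  · exact sum_congr rfl fun j hj => sum_filter_pair_mem_ncPairings ha hj
  · simpa only [erase_insert haT] using
      (mem_ncPairings.mp hP).1.existsUnique_partner (mem_insert_self a T)

theorem weightSum_eq_ite (s : ℕ → ℕ) (h0 : s 0 = 1)
    (hrec : ∀ n : ℕ, 1 ≤ n →
      s (2 * n) = ∑ i ∈ range n, (2 * i + 1) * s (2 * i) * s (2 * (n - i - 1)))
    (S : Finset α) : weightSum S = if Even #S then s #S else 0 := by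
  induction hk : #S using Nat.strong_induction_on generalizing S with
  | _ k ih =>
  rcases Nat.even_or_odd k with ⟨m, rfl⟩ | hodd
  swap
  · rw [if_neg (Nat.not_even_iff_odd.mpr hodd), weightSum_eq_zero_of_odd (hk ▸ hodd)]
  rcases m with _ | m
  · rw [card_eq_zero.mp hk, weightSum_empty, if_pos ⟨0, rfl⟩, h0]
  have hne : S.Nonempty := card_pos.mp (by omega)
  have ha : ∀ x ∈ S.erase (S.min' hne), S.min' hne < x := fun x hx =>
    min'_lt_of_mem_erase_min' S hne hx
  have hT : #(S.erase (S.min' hne)) = 2 * m + 1 := by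
    rw [card_erase_of_mem (min'_mem S hne), hk]
    omega
  set T := S.erase (S.min' hne)
  set f : ℕ → ℕ := fun i => if Even i then s i else 0
  have hterm : ∀ j ∈ T,
      (#{x ∈ T | x < j} + 1) * weightSum {x ∈ T | x < j} * weightSum {x ∈ T | j < x} =
        (#{x ∈ T | x < j} + 1) * f #{x ∈ T | x < j} * f (2 * m - #{x ∈ T | x < j}) := by
    intro j hj
    have hcard := card_filter_lt_add_card_filter_gt hj
    rw [ih _ (by omega) _ rfl, ih _ (by omega) _ rfl, show #{x ∈ T | j < x} =
      2 * m - #{x ∈ T | x < j} by omega]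
  rw [← insert_erase (min'_mem S hne), weightSum_insert ha, sum_congr rfl hterm,
    sum_card_filter_lt T (fun i => (i + 1) * f i * f (2 * m - i)), hT,
    sum_range_two_mul_add_one_of_odd _ (fun i hi => by simp [f, Nat.not_even_iff_odd.mpr hi])]
  rw [if_pos ⟨m + 1, rfl⟩, show m + 1 + (m + 1) = 2 * (m + 1) by ring, hrec (m + 1) (by omega)]
  refine sum_congr rfl fun i hi => ?_
  have hi : i < m + 1 := mem_range.mp hi
  rw [show 2 * m - 2 * i = 2 * (m + 1 - i - 1) by omega]
  simp [f]

end WeightSum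

theorem isPairingOf_iff_isPairing_univ {n : ℕ} {P : Finset (Finset (Fin n))} :
    IsPairingOf P ↔ IsPairing univ P := by
  simp only [IsPairingOf, IsPartitionOf, IsPairing, subset_univ, true_and, mem_univ,
    forall_const]
  exact ⟨fun ⟨⟨_, h⟩, hcard⟩ => ⟨hcard, h⟩,
    fun ⟨hcard, h⟩ => ⟨⟨fun B hB => card_pos.mp (by rw [hcard B hB]; norm_num), h⟩, hcard⟩⟩

theorem innerPoints_eq_card_innerPointsIn {n : ℕ} (B : Finset (Fin n)) :
    innerPoints B = #(innerPointsIn univ B) := by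
  rw [innerPoints, ← Set.ncard_coe_finset]
  congr
  ext c
  simp [innerPointsIn]

theorem isNoncrossing_iff_noncrossing {n : ℕ} {P : Finset (Finset (Fin n))} :
    IsNoncrossing P ↔ Noncrossing P :=
  Iff.rfl

/-- For `s` with `s_0 = 1`, `s_{2n} = Σ_{i=0}^{n-1} (2i+1) s_{2i} s_{2(n-i-1)}`, one has
`s_{2n} = Σ_{π noncrossing pairing of [2n]} Π_{V ∈ π} (ip(V)+1)`. -/
theorem s_eq_sum_noncrossing_pairings_inner_points (s : ℕ → ℕ) (h0 : s 0 = 1)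
    (hrec : ∀ n : ℕ, 1 ≤ n →
      s (2 * n) = ∑ i ∈ Finset.range n, (2 * i + 1) * s (2 * i) * s (2 * (n - i - 1))) :
    ∀ n : ℕ,
      s (2 * n) = ∑ᶠ P ∈ {P : Finset (Finset (Fin (2 * n))) |
          IsPairingOf P ∧ IsNoncrossing P},
        ∏ B ∈ P, (innerPoints B + 1) := by
  intro n
  have hset : {P : Finset (Finset (Fin (2 * n))) | IsPairingOf P ∧ IsNoncrossing P} =
      ↑(ncPairings (univ : Finset (Fin (2 * n)))) := by
    ext P
    rw [Set.mem_ofPred_eq, mem_coe, mem_ncPairings, isPairingOf_iff_isPairing_univ,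
      isNoncrossing_iff_noncrossing]
  rw [hset, finsum_mem_coe_finset]
  simp only [innerPoints_eq_card_innerPointsIn]
  have hsum := weightSum_eq_ite s h0 hrec (univ : Finset (Fin (2 * n)))
  rw [card_univ, Fintype.card_fin, if_pos (even_two_mul n)] at hsum
  exact hsum.symm
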